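/- arXiv:2404.16186 — 2 statements merged into one kernel-verified Lean document; each statement's English description precedes it below -/
import Mathlib

section
/- If T is a tree with total domination subdivision number 3, then every support vertex of T is a weak support vertex (has exactly one leaf neighbor). -/
open SimpleGraph

variable {V : Type*}

/-- `S` is a total dominating set of `G`. -/
def IsTotalDomSet (G : SimpleGraph V) (S : Set V) : Prop :=
  ∀ v : V, ∃ u ∈ S, G.Adj v u

/-- The total domination number. -/
noncomputable def gammaT (G : SimpleGraph V) [Fintype V] : ℕ :=
  sInf {n | ∃ S : Finset V, S.card = n ∧ IsTotalDomSet G ↑S}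

/-- The graph obtained from `G` by subdividing each edge in `F` once. -/
def subdivide (G : SimpleGraph V) (F : Finset (Sym2 V)) :
    SimpleGraph (V ⊕ {e : Sym2 V // e ∈ F}) where
  Adj x y :=
    match x, y with
    | Sum.inl u, Sum.inl v => G.Adj u v ∧ s(u, v) ∉ F
    | Sum.inl u, Sum.inr e => u ∈ e.1
    | Sum.inr e, Sum.inl u => u ∈ e.1
    | Sum.inr _, Sum.inr _ => False
  symm := by
    constructor
    rintro (u | e) (v | f) h
    · exact ⟨h.1.symm, by rw [Sym2.eq_swap]; exact h.2⟩
    · exact h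
    · exact h
    · exact h
  loopless := by
    constructor
    rintro (u | e) h
    · exact G.irrefl h.1
    · exact h

/-- The total domination subdivision number. -/
noncomputable def sdGammaT (G : SimpleGraph V) [Fintype V] [DecidableEq V] : ℕ :=
  sInf {k | ∃ F : Finset (Sym2 V), ↑F ⊆ G.edgeSet ∧ F.card = k ∧
    gammaT G < gammaT (subdivide G F)}

def IsLeaf (G : SimpleGraph V) (v : V) : Prop := ∃! u, G.Adj v u

def IsSupport (G : SimpleGraph V) (v : V) : Prop := ∃ u, G.Adj v u ∧ IsLeaf G u

def IsWeakSupport (G : SimpleGraph V) (v : V) : Prop := ∃! u, G.Adj v u ∧ IsLeaf G u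

def IsStrongSupport (G : SimpleGraph V) (v : V) : Prop :=
  ∃ u w, u ≠ w ∧ G.Adj v u ∧ G.Adj v w ∧ IsLeaf G u ∧ IsLeaf G w

def Is2Packing (G : SimpleGraph V) (S : Set V) : Prop :=
  ∀ u ∈ S, ∀ v ∈ S, u ≠ v → 3 ≤ G.dist u v

noncomputable def packingNumber (G : SimpleGraph V) [Fintype V] : ℕ :=
  sSup {n | ∃ S : Finset V, S.card = n ∧ Is2Packing G ↑S}

def IsPendantEdge (G : SimpleGraph V) (e : Sym2 V) : Prop :=
  ∃ u v, e = s(u, v) ∧ G.Adj u v ∧ IsLeaf G u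

/-- Distance between two edges. -/
noncomputable def edgeDist (G : SimpleGraph V) (e f : Sym2 V) : ℕ :=
  sInf {n | ∃ u ∈ e, ∃ v ∈ f, G.dist u v = n}

/-- Distance from an edge to a set of edges. -/
noncomputable def edistToSet (G : SimpleGraph V) (e : Sym2 V) (F : Set (Sym2 V)) : ℕ :=
  sInf {n | ∃ f ∈ F, edgeDist G e f = n}

/-- Properties (a), (b), (c) of an edge set `F` in `T`. -/
def PropertyABC (T : SimpleGraph V) (F : Set (Sym2 V)) : Prop :=
  (∀ e, IsPendantEdge T e → e ∈ F) ∧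
  (∀ e ∈ F, edistToSet T e (F \ {e}) = 3) ∧
  (∀ e ∈ F, ∀ f ∈ F, e ≠ f →
    ∃! l : List (Sym2 V),
      l.head? = some e ∧ l.getLast? = some f ∧ (∀ x ∈ l, x ∈ F) ∧
      l.Chain' (fun a b => edgeDist T a b = 3))

/-
If `v` is a strong support vertex with leaves `u` and `w`, subdivide the two pendant edges `uv`
and `wv` by new vertices `x` and `y`. A total dominating set of the subdivided tree must contain
`x` and `y`, the only neighbours of `u` and `w`, and also `u` or `v`, to dominate `x`. Replacing
`x` and `y` by `u` and `v` therefore yields a smaller total dominating set of the tree, so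
subdividing two edges already raises `γₜ`, and `sd_γₜ ≤ 2`.
-/

variable {G : SimpleGraph V}

lemma gammaT_le_card {S : Finset V} [Fintype V] (hS : IsTotalDomSet G ↑S) :
    gammaT G ≤ S.card :=
  Nat.sInf_le ⟨S, rfl, hS⟩

lemma exists_isTotalDomSet_card_eq_gammaT [Fintype V] (hG : ∀ z, ∃ y, G.Adj z y) :
    ∃ S : Finset V, IsTotalDomSet G ↑S ∧ S.card = gammaT G := by
  classical
  have hne : {n | ∃ S : Finset V, S.card = n ∧ IsTotalDomSet G ↑S}.Nonempty :=
    ⟨_, Finset.univ, rfl, fun z => (hG z).imp fun y hy => ⟨by simp, hy⟩⟩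
  obtain ⟨S, hcard, hS⟩ := Nat.sInf_mem hne
  exact ⟨S, hS, hcard⟩

lemma sdGammaT_le_card [Fintype V] [DecidableEq V] {F : Finset (Sym2 V)} (hF : ↑F ⊆ G.edgeSet)
    (hlt : gammaT G < gammaT (subdivide G F)) : sdGammaT G ≤ F.card :=
  Nat.sInf_le ⟨F, hF, rfl, hlt⟩

lemma IsLeaf.eq_of_adj {u v z : V} (hu : IsLeaf G u) (hv : G.Adj u v) (hz : G.Adj u z) : z = v :=
  hu.unique hz hv

lemma exists_adj_subdivide (hG : ∀ z, ∃ y, G.Adj z y) (F : Finset (Sym2 V))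
    (a : V ⊕ {e : Sym2 V // e ∈ F}) : ∃ b, (subdivide G F).Adj a b := by
  classical
  rcases a with z | ⟨e, he⟩
  · obtain ⟨y, hy⟩ := hG z
    by_cases hzy : s(z, y) ∈ F
    · exact ⟨Sum.inr ⟨s(z, y), hzy⟩, Sym2.mem_mk_left z y⟩
    · exact ⟨Sum.inl y, hy, hzy⟩
  · exact ⟨Sum.inl e.out.1, (Sym2.mem_iff_exists.2 ⟨e.out.2, e.out_eq.symm⟩ :)⟩

namespace IsTotalDomSet

variable {F : Finset (Sym2 V)} {S : Finset (V ⊕ {e : Sym2 V // e ∈ F})}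

lemma inr_mem_subdivide_of_isLeaf (hS : IsTotalDomSet (subdivide G F) ↑S)
    (hF : ↑F ⊆ G.edgeSet) {u v : V} (hu : IsLeaf G u) (huv : G.Adj u v) (he : s(u, v) ∈ F) :
    Sum.inr ⟨s(u, v), he⟩ ∈ S := by
  obtain ⟨d | ⟨e, heF⟩, hd, hadj⟩ := hS (Sum.inl u)
  · obtain ⟨hud, hnot⟩ := hadj
    exact absurd (hu.eq_of_adj huv hud ▸ he) hnot
  · obtain ⟨t, rfl⟩ := Sym2.mem_iff_exists.1 (show u ∈ e from hadj)
    obtain rfl := hu.eq_of_adj huv (hF heF)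
    exact hd

lemma exists_mem_toLeft_of_mem_subdivide (hS : IsTotalDomSet (subdivide G F) ↑S) {e : Sym2 V}
    (he : e ∈ F) : ∃ t ∈ e, t ∈ S.toLeft := by
  obtain ⟨t | f, hd, hadj⟩ := hS (Sum.inr ⟨e, he⟩)
  · exact ⟨t, hadj, Finset.mem_toLeft.2 hd⟩
  · exact hadj.elim

lemma exists_adj_mem_toLeft_subdivide (hS : IsTotalDomSet (subdivide G F) ↑S) {z : V}
    (hz : ∀ e ∈ F, z ∉ e) : ∃ t ∈ S.toLeft, G.Adj z t := by
  obtain ⟨t | ⟨e, he⟩, hd, hadj⟩ := hS (Sum.inl z)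
  · exact ⟨t, Finset.mem_toLeft.2 hd, hadj.1⟩
  · exact (hz e he hadj).elim

end IsTotalDomSet

lemma gammaT_lt_gammaT_subdivide_of_leaves [Fintype V] [DecidableEq V]
    (hG : ∀ z, ∃ y, G.Adj z y) {v u w : V} (huw : u ≠ w) (hvu : G.Adj v u) (hvw : G.Adj v w)
    (hu : IsLeaf G u) (hw : IsLeaf G w) :
    gammaT G < gammaT (subdivide G {s(u, v), s(w, v)}) := by
  set F : Finset (Sym2 V) := {s(u, v), s(w, v)}
  have hF : ↑F ⊆ G.edgeSet := by
    simp [F, Set.insert_subset_iff, hvu.symm, hvw.symm]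
  have huF : s(u, v) ∈ F := by simp [F]
  have hwF : s(w, v) ∈ F := by simp [F]
  obtain ⟨S', hS', hcard⟩ :=
    exists_isTotalDomSet_card_eq_gammaT (exists_adj_subdivide hG F)
  have hright : 2 ≤ S'.toRight.card := by
    have hsub : {⟨s(u, v), huF⟩, ⟨s(w, v), hwF⟩} ⊆ S'.toRight := by
      simp only [Finset.insert_subset_iff, Finset.singleton_subset_iff, Finset.mem_toRight]
      exact ⟨hS'.inr_mem_subdivide_of_isLeaf hF hu hvu.symm huF,
        hS'.inr_mem_subdivide_of_isLeaf hF hw hvw.symm hwF⟩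
    refine le_of_eq_of_le ?_ (Finset.card_le_card hsub)
    exact (Finset.card_pair fun h => huw (Sym2.congr_left.1 (congrArg Subtype.val h))).symm
  have huv : u ∈ S'.toLeft ∨ v ∈ S'.toLeft := by
    obtain ⟨t, ht, htA⟩ := hS'.exists_mem_toLeft_of_mem_subdivide huF
    rcases Sym2.mem_iff.1 ht with rfl | rfl <;> simp [htA]
  have hS : IsTotalDomSet G ↑(insert u (insert v S'.toLeft)) := by
    intro z
    by_cases hz : z = u ∨ z = v ∨ z = w
    · rcases hz with rfl | rfl | rfl
      · exact ⟨v, by simp, hvu.symm⟩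
      · exact ⟨u, by simp, hvu⟩
      · exact ⟨v, by simp, hvw.symm⟩
    · have hzF : ∀ e ∈ F, z ∉ e := by
        simp only [not_or] at hz
        simp [F, hz.1, hz.2.1, hz.2.2]
      obtain ⟨t, htA, hzt⟩ := hS'.exists_adj_mem_toLeft_subdivide hzF
      exact ⟨t, by simp [htA], hzt⟩
  have hScard : (insert u (insert v S'.toLeft)).card ≤ S'.toLeft.card + 1 := by
    rcases huv with huA | hvA
    · rw [Finset.insert_eq_of_mem (Finset.mem_insert_of_mem huA)]
      exact Finset.card_insert_le v _
    · rw [Finset.insert_eq_of_mem hvA]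
      exact Finset.card_insert_le u _
  calc gammaT G ≤ (insert u (insert v S'.toLeft)).card := gammaT_le_card hS
    _ < S'.toLeft.card + S'.toRight.card := by omega
    _ = gammaT (subdivide G F) := by rw [Finset.card_toLeft_add_card_toRight, hcard]

lemma sdGammaT_le_two_of_isStrongSupport [Fintype V] [DecidableEq V]
    (hG : ∀ z, ∃ y, G.Adj z y) {v : V} (hv : IsStrongSupport G v) : sdGammaT G ≤ 2 := by
  obtain ⟨u, w, huw, hvu, hvw, hu, hw⟩ := hv
  refine (sdGammaT_le_card ?_ (gammaT_lt_gammaT_subdivide_of_leaves hG huw hvu hvw hu hw)).trans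
    Finset.card_le_two
  simp [Set.insert_subset_iff, hvu.symm, hvw.symm]

/-- If a tree has total domination subdivision number `3`, then every
support vertex is a weak support vertex. -/
theorem class3_support_weak {V : Type*} [Fintype V] [DecidableEq V]
    (T : SimpleGraph V) (hT : T.IsTree) (h3 : sdGammaT T = 3) :
    ∀ v : V, IsSupport T v → IsWeakSupport T v := by
  rintro v ⟨u, hvu, hu⟩
  refine ⟨u, ⟨hvu, hu⟩, fun u' ⟨hvu', hu'⟩ => ?_⟩
  by_contra hne
  have : Nontrivial V := hvu.nontrivial
  have hT' : ∀ z, ∃ y, T.Adj z y := hT.connected.preconnected.exists_adj_of_nontrivial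
  have := sdGammaT_le_two_of_isStrongSupport hT' ⟨u', u, hne, hvu', hvu, hu', hu⟩
  omega
end

section
/- Let T be a tree of order at least 6. Then the set of weak support vertices of T is a maximum 2-packing in T if and only if T is isomorphic to a 2-subdivision R(P) of some tree R of order at least 2 with respect to some family P of partitions of the neighborhoods of the vertices of R. -/
open SimpleGraph

variable {V : Type*}

/-- `Pf` is a partition of the finset `S`. -/
def IsFinsetPartitionOf {V : Type*} (Pf : Finset (Finset V)) (S : Finset V) : Prop :=
  (∀ A ∈ Pf, A.Nonempty) ∧ (∀ x, x ∈ S ↔ ∃ A ∈ Pf, x ∈ A) ∧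
    ∀ A ∈ Pf, ∀ B ∈ Pf, A ≠ B → Disjoint A B

/-- The vertex type of the 2-subdivision `G(Pf)`: the original vertices, the pendant
leaves `(v,1)`, and the vertices `(v,A)` for `A ∈ Pf(v)`. -/
abbrev TwoSubVert (V : Type*) (P : V → Finset (Finset V)) : Type _ :=
  V ⊕ (V ⊕ Σ v : V, {A : Finset V // A ∈ P v})

/-- The 2-subdivision `G(Pf)` of `G` with respect to the family of partitions `Pf`. -/
def twoSubdivision {V : Type*} (G : SimpleGraph V) (P : V → Finset (Finset V)) :
    SimpleGraph (TwoSubVert V P) where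
  Adj x y :=
    match x, y with
    | Sum.inl u, Sum.inr (Sum.inl v) => u = v
    | Sum.inr (Sum.inl u), Sum.inl v => u = v
    | Sum.inl u, Sum.inr (Sum.inr p) => u = p.1
    | Sum.inr (Sum.inr p), Sum.inl u => u = p.1
    | Sum.inr (Sum.inr p), Sum.inr (Sum.inr q) =>
        G.Adj p.1 q.1 ∧ q.1 ∈ p.2.1 ∧ p.1 ∈ q.2.1
    | _, _ => False
  symm := by
    constructor
    rintro (u | u | p) (v | v | q) h
    all_goals first
      | exact h
      | exact h.symm
      | exact ⟨h.1.symm, h.2.2, h.2.1⟩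
  loopless := by
    constructor
    rintro (u | u | p) h
    · exact h
    · exact h
    · exact G.irrefl h.1

/-!
If the weak supports `W` of `T` form a maximum 2-packing, an exchange argument shows that every
vertex outside `W` is adjacent to `W`: otherwise moving each `w ∈ W` to its leaf and adding the
offending vertex gives a larger 2-packing. So `T` consists of `W`, one pendant leaf per `w ∈ W`,
and further vertices `m`, each adjacent to exactly one `w ∈ W` and reaching other vertices of `W`
through paths `m - m' - w'`. Taking for `R` the graph on `W` of paths of length 3 and for `P(w)`
the grouping of the `R`-neighbours of `w` by the first vertex `m` of that path, `m` plays the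
role of the vertex `(w, A)` of `R(P)`; uniqueness of paths in `T` makes this an isomorphism, and
lifting walks of `R` to `T` shows that `R` is a tree.

Conversely, the weak supports of `R(P)` are the vertices of `R`. They are pairwise at distance at least 3,
and every vertex of `R(P)` lies in the closed neighbourhood of one of them, which a 2-packing
meets at most once.
-/

def IsMax2Packing (G : SimpleGraph V) (S : Set V) : Prop :=
  Is2Packing G S ∧ ∀ S' : Set V, Is2Packing G S' → S'.ncard ≤ S.ncard

def weakSupports (G : SimpleGraph V) : Set V := {v | IsWeakSupport G v}

section Basic

variable {G : SimpleGraph V}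

lemma IsLeaf.eq_of_adj_s8 {l a b : V} (hl : IsLeaf G l) (ha : G.Adj l a) (hb : G.Adj l b) :
    a = b :=
  ExistsUnique.unique hl ha hb

lemma not_isLeaf_of_adj_of_adj {v a b : V} (ha : G.Adj v a) (hb : G.Adj v b) (hab : a ≠ b) :
    ¬ IsLeaf G v :=
  fun hl => hab (hl.eq_of_adj_s8 ha hb)

lemma exists_adj_ne_of_not_isLeaf {v u : V} (hv : ¬ IsLeaf G v) (hu : G.Adj v u) :
    ∃ y, G.Adj v y ∧ y ≠ u := by
  by_contra! h
  exact hv ⟨u, hu, h⟩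

lemma SimpleGraph.dist_le_two_of_adj_of_adj {u x v : V} (h₁ : G.Adj u x) (h₂ : G.Adj x v) :
    G.dist u v ≤ 2 := by
  simpa using dist_le (h₁.toWalk.append h₂.toWalk)

lemma IsLeaf.dist_eq_add_one (hc : G.Connected) {l s x : V} (hl : IsLeaf G l)
    (hs : G.Adj l s) (hx : x ≠ l) : G.dist x l = G.dist x s + 1 := by
  have hle : G.dist x l ≤ G.dist x s + 1 := by
    have := hc.dist_triangle (u := x) (v := s) (w := l)
    rwa [dist_eq_one_iff_adj.mpr hs.symm] at this
  obtain ⟨p, hp⟩ := (hc l x).exists_walk_length_eq_dist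
  cases p with
  | nil => exact absurd rfl hx
  | cons h q =>
    obtain rfl := hl.eq_of_adj_s8 hs h
    have := dist_le q
    rw [Walk.length_cons] at hp
    have e₁ : G.dist x l = G.dist l x := dist_comm
    have e₂ : G.dist x s = G.dist s x := dist_comm
    omega

lemma IsLeaf.not_adj_of_isLeaf [Fintype V] (hc : G.Connected) (h3 : 3 ≤ Fintype.card V)
    {l l' : V} (hl : IsLeaf G l) (hl' : IsLeaf G l') : ¬ G.Adj l l' := by
  classical
  intro h
  have hcard : ({l, l'} : Finset V).card < (Finset.univ : Finset V).card := by
    rw [Finset.card_univ]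
    exact Finset.card_le_two.trans_lt (by omega)
  obtain ⟨v, -, hv⟩ := Finset.exists_mem_notMem_of_card_lt_card hcard
  simp only [Finset.mem_insert, Finset.mem_singleton, not_or] at hv
  have := hl.dist_eq_add_one hc h hv.1
  have := hl'.dist_eq_add_one hc h.symm hv.2
  omega

lemma IsLeaf.not_isWeakSupport [Fintype V] (hc : G.Connected) (h3 : 3 ≤ Fintype.card V)
    {l : V} (hl : IsLeaf G l) : ¬ IsWeakSupport G l :=
  fun ⟨_, ⟨hu, hul⟩, _⟩ => hl.not_adj_of_isLeaf hc h3 hul hu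

lemma SimpleGraph.IsAcyclic.not_adj_of_adj_of_adj (hG : G.IsAcyclic) {a b c : V}
    (hab : G.Adj a b) (hbc : G.Adj b c) : ¬ G.Adj c a := fun hca =>
  hG.dist_ne_of_adj hbc hab.reachable <| by
    rw [dist_eq_one_iff_adj.mpr hab, dist_eq_one_iff_adj.mpr hca.symm]

end Basic

section Packing

variable {G : SimpleGraph V} {S : Set V}

lemma is2Packing_iff_pairwise : Is2Packing G S ↔ S.Pairwise fun u v => 3 ≤ G.dist u v :=
  Iff.rfl

lemma Is2Packing.not_adj (hS : Is2Packing G S) {u v : V} (hu : u ∈ S) (hv : v ∈ S) :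
    ¬ G.Adj u v := fun h => by
  have := hS u hu v hv h.ne
  rw [dist_eq_one_iff_adj.mpr h] at this
  omega

lemma Is2Packing.notMem_of_adj (hS : Is2Packing G S) {u x : V} (hu : u ∈ S) (h : G.Adj u x) :
    x ∉ S :=
  fun hx => hS.not_adj hu hx h

lemma Is2Packing.eq_of_adj_of_adj (hS : Is2Packing G S) {x u v : V} (hu : u ∈ S) (hv : v ∈ S)
    (hxu : G.Adj x u) (hxv : G.Adj x v) : u = v := by
  by_contra hne
  have := hS u hu v hv hne
  have := dist_le_two_of_adj_of_adj hxu.symm hxv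
  omega

lemma Is2Packing.eq_of_eq_or_adj (hS : Is2Packing G S) {u v c : V} (hu : u ∈ S) (hv : v ∈ S)
    (huc : u = c ∨ G.Adj u c) (hvc : v = c ∨ G.Adj v c) : u = v := by
  rcases huc with rfl | huc <;> rcases hvc with rfl | hvc
  · rfl
  · exact (hS.not_adj hu hv hvc.symm).elim
  · exact (hS.not_adj hu hv huc).elim
  · exact hS.eq_of_adj_of_adj hu hv huc.symm hvc.symm

lemma SimpleGraph.Reachable.three_le_dist {u v : V} (hr : G.Reachable u v) (hne : u ≠ v)
    (hadj : ¬ G.Adj u v) (hmid : ∀ x, G.Adj u x → ¬ G.Adj x v) : 3 ≤ G.dist u v := by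
  have := hr.one_lt_dist_of_ne_of_not_adj hne hadj
  refine (Nat.eq_or_lt_of_le this).elim (fun h => ?_) id
  obtain ⟨x, hx⟩ := (edist_eq_two_iff.mp (by rw [← hr.coe_dist_eq_edist, ← h]; rfl)).2.2
  exact (hmid x hx.1 hx.2.symm).elim

lemma Is2Packing.eq_of_adj_adj_adj (hG : G.IsAcyclic) (hS : Is2Packing G S)
    {a b c d b' c' : V} (ha : a ∈ S) (hd : d ∈ S)
    (h₁ : G.Adj a b) (h₂ : G.Adj b c) (h₃ : G.Adj c d)
    (h₁' : G.Adj a b') (h₂' : G.Adj b' c') (h₃' : G.Adj c' d) : b = b' ∧ c = c' := by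
  have had : a ≠ d := by
    rintro rfl
    exact hG.not_adj_of_adj_of_adj h₁ h₂ h₃
  have isPath : ∀ {x y : V} (h₁ : G.Adj a x) (h₂ : G.Adj x y) (h₃ : G.Adj y d),
      (Walk.cons h₁ (Walk.cons h₂ (Walk.cons h₃ Walk.nil))).IsPath := by
    intro x y h₁ h₂ h₃
    have hx := hS.notMem_of_adj ha h₁
    have hy := hS.notMem_of_adj hd h₃.symm
    have hay : a ≠ y := fun h => hy (h ▸ ha)
    have hxd : x ≠ d := fun h => hx (h ▸ hd)
    simp [Walk.isPath_def, h₁.ne, h₂.ne, h₃.ne, had, hay, hxd]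
  have := congrArg (fun p : G.Path a d => p.1.support)
    ((hG.subsingleton_path a d).elim ⟨_, isPath h₁ h₂ h₃⟩ ⟨_, isPath h₁' h₂' h₃'⟩)
  simpa using this

/-- Moving each `s ∈ S` to one of its leaves increases the distances within `S` by 2 and leaves
room for `x`. -/
lemma Is2Packing.exists_ncard_eq_add_one [Finite V] (hc : G.Connected) (hS : Is2Packing G S)
    (hsupp : ∀ s ∈ S, IsSupport G s) {x : V} (hx : ∀ s ∈ S, 2 ≤ G.dist x s) :
    ∃ S' : Set V, Is2Packing G S' ∧ S'.ncard = S.ncard + 1 := by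
  choose! f hf using hsupp
  have hdist : ∀ s ∈ S, ∀ v, v ≠ f s → G.dist v (f s) = G.dist v s + 1 :=
    fun s hs v hv => (hf s hs).2.dist_eq_add_one hc (hf s hs).1.symm hv
  have hinj : S.InjOn f := fun s hs t ht hst =>
    (hf s hs).2.eq_of_adj_s8 (hf s hs).1.symm (hst ▸ (hf t ht).1.symm)
  have hxf : x ∉ f '' S := by
    rintro ⟨s, hs, rfl⟩
    have := hx s hs
    rw [dist_comm, dist_eq_one_iff_adj.mpr (hf s hs).1] at this
    omega
  refine ⟨insert x (f '' S), ?_, ?_⟩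
  · rw [is2Packing_iff_pairwise, Set.pairwise_insert_of_notMem hxf, hinj.pairwise_image]
    refine ⟨fun s hs t ht hst => ?_, ?_⟩
    · have hft : f s ≠ f t := fun h => hst (hinj hs ht h)
      have htf : t ≠ f s := fun h => hS.notMem_of_adj hs (hf s hs).1 (h ▸ ht)
      have := hS t ht s hs hst.symm
      simp only [Function.onFun, hdist t ht (f s) hft, dist_comm (u := f s) (v := t),
        hdist s hs t htf]
      omega
    · rintro _ ⟨s, hs, rfl⟩
      have := hx s hs
      have := hdist s hs x fun h => hxf ⟨s, hs, h.symm⟩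
      rw [dist_comm (u := f s)]
      omega
  · rw [Set.ncard_insert_of_notMem hxf, hinj.ncard_image]

lemma IsMax2Packing.exists_adj [Finite V] (hc : G.Connected) (hS : IsMax2Packing G S)
    (hsupp : ∀ s ∈ S, IsSupport G s) {x : V} (hx : x ∉ S) : ∃ s ∈ S, G.Adj x s := by
  by_contra! hadj
  obtain ⟨S', hS', hcard⟩ := hS.1.exists_ncard_eq_add_one hc hsupp fun s hs =>
    hc.one_lt_dist_of_ne_of_not_adj (by rintro rfl; exact hx hs) (hadj s hs)
  have := hS.2 S' hS'
  omega

end Packing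

section ThreePathGraph

variable (G : SimpleGraph V) (S : Set V)

/-- The graph `R`: for a 2-packing `S`, its edges join the vertices of `S` at distance 3. -/
def threePathGraph : SimpleGraph S where
  Adj a b := a ≠ b ∧ ∃ m m', G.Adj a m ∧ G.Adj m m' ∧ G.Adj m' b
  symm := ⟨fun _ _ ⟨hne, m, m', h₁, h₂, h₃⟩ => ⟨hne.symm, m', m, h₃.symm, h₂.symm, h₁.symm⟩⟩
  loopless := ⟨fun _ h => h.1 rfl⟩

noncomputable def block [Fintype V] (m : V) : Finset S := by
  classical exact Finset.univ.filter fun z : S => ∃ m', G.Adj m m' ∧ G.Adj m' z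

/-- The family `P(w)`: the `R`-neighbours `z` of `w`, grouped by the neighbour `m` of `w` on the
path `w - m - m' - z`. -/
noncomputable def blockPartition [Fintype V] (w : S) : Finset (Finset S) := by
  classical exact ((Finset.univ.filter (G.Adj w)).image (block G S)).filter Finset.Nonempty

variable {G S}

lemma SimpleGraph.Connected.exists_adj_adj_dist_add_two_le (hc : G.Connected) {u v : V}
    (h : 3 ≤ G.dist u v) :
    ∃ x₁ x₂, G.Adj u x₁ ∧ G.Adj x₁ x₂ ∧ G.dist x₂ v + 2 ≤ G.dist u v := by
  obtain ⟨p, hp⟩ := (hc u v).exists_walk_length_eq_dist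
  rcases p with _ | ⟨h₁, _ | ⟨h₂, q⟩⟩
  · simp at h
  · simp only [Walk.length_cons, Walk.length_nil, zero_add] at hp
    omega
  · refine ⟨_, _, h₁, h₂, ?_⟩
    have := dist_le q
    simp only [Walk.length_cons] at hp
    omega

lemma exists_threePathGraph_adj_dist_lt (hc : G.Connected) (hS : Is2Packing G S)
    (hdom : ∀ x ∉ S, ∃ s ∈ S, G.Adj x s) {a b : S} (hab : a ≠ b) :
    ∃ c : S, (threePathGraph G S).Adj a c ∧ G.dist c b < G.dist a b := by
  obtain ⟨x₁, x₂, h₁, h₂, hx₂⟩ :=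
    hc.exists_adj_adj_dist_add_two_le (hS a a.2 b b.2 (Subtype.coe_ne_coe.mpr hab))
  have hx₂S : x₂ ∉ S := by
    intro hx₂S
    have := hS a a.2 x₂ hx₂S (by rintro rfl; omega)
    have := dist_le_two_of_adj_of_adj h₁ h₂
    omega
  obtain ⟨c, hcS, hx₂c⟩ := hdom x₂ hx₂S
  have hcb : G.dist c b ≤ G.dist x₂ b + 1 := by
    have := hc.dist_triangle (u := c) (v := x₂) (w := b)
    rwa [dist_eq_one_iff_adj.mpr hx₂c.symm, add_comm] at this
  refine ⟨⟨c, hcS⟩, ⟨fun hac => ?_, x₁, x₂, h₁, h₂, hx₂c⟩, (by omega : G.dist c b < G.dist a b)⟩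
  rw [show (a : V) = c from congrArg Subtype.val hac] at hx₂
  omega

lemma threePathGraph_connected [Nonempty S] (hc : G.Connected) (hS : Is2Packing G S)
    (hdom : ∀ x ∉ S, ∃ s ∈ S, G.Adj x s) : (threePathGraph G S).Connected := by
  refine ⟨fun a b => ?_⟩
  induction hd : G.dist a b using Nat.strong_induction_on generalizing a with
  | _ n ih =>
    by_cases hab : a = b
    · exact hab ▸ Reachable.refl _
    obtain ⟨c, hac, hcb⟩ := exists_threePathGraph_adj_dist_lt hc hS hdom hab
    exact hac.reachable.trans (ih _ (hd ▸ hcb) c rfl)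

lemma exists_walk_not_mem_edges_of_threePathGraph_walk (hS : Is2Packing G S) {w w' : S}
    {m m' : V} (hw : G.Adj w m) (hw' : G.Adj m' w') {a b : S}
    (p : (threePathGraph G S).Walk a b) (hp : s(w, w') ∉ p.edges) :
    ∃ t : G.Walk a b, s(m, m') ∉ t.edges := by
  have hm := hS.notMem_of_adj w.2 hw
  have hm' := hS.notMem_of_adj w'.2 hw'.symm
  have hne : ∀ {a g : V}, a ∈ S → s(m, m') ≠ s(a, g) := by
    intro a g ha h
    rcases Sym2.mem_iff.mp (h ▸ Sym2.mem_mk_left a g : a ∈ s(m, m')) with rfl | rfl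
    exacts [hm ha, hm' ha]
  revert hp
  induction p with
  | nil => exact fun _ => ⟨.nil, by simp⟩
  | @cons a c b hac p ih =>
    intro hp
    simp only [Walk.edges_cons, List.mem_cons, not_or] at hp
    obtain ⟨-, g, g', e₁, e₂, e₃⟩ := hac
    obtain ⟨t, ht⟩ := ih hp.2
    refine ⟨.cons e₁ (.cons e₂ (.cons e₃ t)), ?_⟩
    simp only [Walk.edges_cons, List.mem_cons, not_or]
    refine ⟨hne a.2, fun h => hp.1 ?_, fun h => hne c.2 (h.trans Sym2.eq_swap), ht⟩
    rcases Sym2.eq_iff.mp h with ⟨rfl, rfl⟩ | ⟨rfl, rfl⟩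
    · rw [Subtype.ext (hS.eq_of_adj_of_adj w.2 a.2 hw.symm e₁.symm),
        Subtype.ext (hS.eq_of_adj_of_adj w'.2 c.2 hw' e₃)]
    · rw [Subtype.ext (hS.eq_of_adj_of_adj w.2 c.2 hw.symm e₃),
        Subtype.ext (hS.eq_of_adj_of_adj w'.2 a.2 hw' e₁.symm), Sym2.eq_swap]

lemma threePathGraph_isAcyclic (hG : G.IsAcyclic) (hS : Is2Packing G S) :
    (threePathGraph G S).IsAcyclic := by
  refine isAcyclic_iff_forall_adj_isBridge.mpr fun w w' hww' => ?_
  obtain ⟨-, m, m', hw, hmm', hw'⟩ := hww'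
  refine isBridge_iff_forall_walk_mem_edges.mpr fun p => ?_
  by_contra hp
  obtain ⟨t, ht⟩ := exists_walk_not_mem_edges_of_threePathGraph_walk hS hw hw' p hp
  have hm := hS.notMem_of_adj w.2 hw
  have hm' := hS.notMem_of_adj w'.2 hw'.symm
  have := isBridge_iff_forall_walk_mem_edges.mp (isAcyclic_iff_forall_adj_isBridge.mp hG hmm')
    (.cons hw.symm (t.append (.cons hw'.symm .nil)))
  simp only [Walk.edges_cons, Walk.edges_append, Walk.edges_nil, List.mem_cons,
    List.mem_append, List.not_mem_nil, or_false] at this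
  rcases this with h | h | h
  · exact hm' (Sym2.congr_right.mp h ▸ w.2)
  · exact ht h
  · exact hm (Sym2.congr_left.mp h ▸ w'.2)

variable [Fintype V]

@[simp]
lemma mem_block {m : V} {z : S} : z ∈ block G S m ↔ ∃ m', G.Adj m m' ∧ G.Adj m' z := by
  simp [block]

lemma mem_blockPartition {w : S} {A : Finset S} :
    A ∈ blockPartition G S w ↔ A.Nonempty ∧ ∃ m, G.Adj w m ∧ block G S m = A := by
  simp [blockPartition, and_comm]

lemma threePathGraph_adj_iff (hG : G.IsAcyclic) {a b : S} :
    (threePathGraph G S).Adj a b ↔ ∃ m, G.Adj a m ∧ b ∈ block G S m := by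
  simp only [mem_block]
  constructor
  · rintro ⟨-, m, m', h₁, h₂, h₃⟩
    exact ⟨m, h₁, m', h₂, h₃⟩
  · rintro ⟨m, h₁, m', h₂, h₃⟩
    refine ⟨?_, m, m', h₁, h₂, h₃⟩
    rintro rfl
    exact hG.not_adj_of_adj_of_adj h₁ h₂ h₃

lemma eq_of_mem_block (hG : G.IsAcyclic) (hS : Is2Packing G S) {w z : S} {m₁ m₂ : V}
    (h₁ : G.Adj w m₁) (h₂ : G.Adj w m₂) (hz₁ : z ∈ block G S m₁) (hz₂ : z ∈ block G S m₂) :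
    m₁ = m₂ := by
  obtain ⟨m₁', e₁, e₁'⟩ := mem_block.mp hz₁
  obtain ⟨m₂', e₂, e₂'⟩ := mem_block.mp hz₂
  exact (hS.eq_of_adj_adj_adj hG w.2 z.2 h₁ e₁ e₁' h₂ e₂ e₂').1

lemma not_isLeaf_of_block_nonempty (hS : Is2Packing G S) {w m : V} (hw : w ∈ S)
    (hwm : G.Adj w m) (hm : (block G S m).Nonempty) : ¬ IsLeaf G m := by
  obtain ⟨z, hz⟩ := hm
  obtain ⟨m', hmm', hm'z⟩ := mem_block.mp hz
  refine not_isLeaf_of_adj_of_adj hwm.symm hmm' fun h => hS.not_adj hw z.2 ?_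
  rwa [h]

lemma block_nonempty (hS : Is2Packing G S) (hdom : ∀ x ∉ S, ∃ s ∈ S, G.Adj x s)
    {m : V} (hmS : m ∉ S) (hm : ¬ IsLeaf G m) : (block G S m).Nonempty := by
  obtain ⟨w, hw, hmw⟩ := hdom m hmS
  obtain ⟨y, hmy, hyw⟩ := exists_adj_ne_of_not_isLeaf hm hmw
  obtain ⟨z, hz, hyz⟩ := hdom y fun hy => hyw (hS.eq_of_adj_of_adj hy hw hmy hmw)
  exact ⟨⟨z, hz⟩, mem_block.mpr ⟨y, hmy, hyz⟩⟩

lemma isFinsetPartitionOf_blockPartition (hG : G.IsAcyclic) (hS : Is2Packing G S)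
    [(threePathGraph G S).LocallyFinite] (w : S) :
    IsFinsetPartitionOf (blockPartition G S w) ((threePathGraph G S).neighborFinset w) := by
  refine ⟨fun A hA => (mem_blockPartition.mp hA).1, fun z => ?_, ?_⟩
  · rw [mem_neighborFinset, threePathGraph_adj_iff hG]
    constructor
    · rintro ⟨m, hm, hz⟩
      exact ⟨block G S m, mem_blockPartition.mpr ⟨⟨z, hz⟩, m, hm, rfl⟩, hz⟩
    · rintro ⟨A, hA, hz⟩
      obtain ⟨-, m, hm, rfl⟩ := mem_blockPartition.mp hA
      exact ⟨m, hm, hz⟩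
  · intro A hA B hB hAB
    obtain ⟨-, m₁, h₁, rfl⟩ := mem_blockPartition.mp hA
    obtain ⟨-, m₂, h₂, rfl⟩ := mem_blockPartition.mp hB
    refine Finset.disjoint_left.mpr fun z hz₁ hz₂ => hAB ?_
    rw [eq_of_mem_block hG hS h₁ h₂ hz₁ hz₂]

end ThreePathGraph

section WeakSupports

variable {T : SimpleGraph V}

noncomputable def pendant (w : weakSupports T) : V :=
  (ExistsUnique.exists (w.2 : IsWeakSupport T w)).choose

lemma adj_pendant (w : weakSupports T) : T.Adj w (pendant w) ∧ IsLeaf T (pendant w) :=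
  (ExistsUnique.exists (w.2 : IsWeakSupport T w)).choose_spec

lemma eq_pendant {w : weakSupports T} {l : V} (hwl : T.Adj w l) (hl : IsLeaf T l) :
    l = pendant w :=
  ExistsUnique.unique (w.2 : IsWeakSupport T w) ⟨hwl, hl⟩ (adj_pendant w)

lemma adj_pendant_iff {w w' : weakSupports T} : T.Adj w (pendant w') ↔ w = w' := by
  refine ⟨fun h => Subtype.ext ((adj_pendant w').2.eq_of_adj_s8 h.symm (adj_pendant w').1.symm), ?_⟩
  rintro rfl
  exact (adj_pendant w).1

variable [Fintype V]

noncomputable def blockVertex (w : weakSupports T)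
    (A : {A // A ∈ blockPartition T (weakSupports T) w}) : V :=
  (mem_blockPartition.mp A.2).2.choose

lemma adj_blockVertex (w : weakSupports T) (A : {A // A ∈ blockPartition T (weakSupports T) w}) :
    T.Adj w (blockVertex w A) ∧ block T (weakSupports T) (blockVertex w A) = A :=
  (mem_blockPartition.mp A.2).2.choose_spec

lemma block_blockVertex_nonempty (w : weakSupports T)
    (A : {A // A ∈ blockPartition T (weakSupports T) w}) :
    (block T (weakSupports T) (blockVertex w A)).Nonempty :=
  (adj_blockVertex w A).2 ▸ (mem_blockPartition.mp A.2).1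

lemma adj_blockVertex_iff (hS : Is2Packing T (weakSupports T)) {w w' : weakSupports T}
    {A : {A // A ∈ blockPartition T (weakSupports T) w'}} :
    T.Adj w (blockVertex w' A) ↔ w = w' := by
  refine ⟨fun h => Subtype.ext (hS.eq_of_adj_of_adj w.2 w'.2 h.symm (adj_blockVertex w' A).1.symm),
    ?_⟩
  rintro rfl
  exact (adj_blockVertex w A).1

lemma not_adj_pendant_blockVertex (hS : Is2Packing T (weakSupports T)) {w w' : weakSupports T}
    {A : {A // A ∈ blockPartition T (weakSupports T) w'}} :
    ¬ T.Adj (pendant w) (blockVertex w' A) := fun h => by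
  have := (adj_pendant w).2.eq_of_adj_s8 h (adj_pendant w).1.symm
  exact hS.notMem_of_adj w'.2 (adj_blockVertex w' A).1 (this ▸ w.2)

lemma adj_blockVertex_blockVertex_iff (hG : T.IsAcyclic) (hS : Is2Packing T (weakSupports T))
    {w w' : weakSupports T}
    {A : {A // A ∈ blockPartition T (weakSupports T) w}}
    {B : {B // B ∈ blockPartition T (weakSupports T) w'}} :
    T.Adj (blockVertex w A) (blockVertex w' B) ↔
      (threePathGraph T (weakSupports T)).Adj w w' ∧ w' ∈ (A : Finset _) ∧ w ∈ (B : Finset _) := by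
  obtain ⟨hwm, hA⟩ := adj_blockVertex w A
  obtain ⟨hw'm', hB⟩ := adj_blockVertex w' B
  rw [← hA, ← hB]
  constructor
  · intro h
    have h₁ := mem_block.mpr ⟨_, h, hw'm'.symm⟩
    exact ⟨(threePathGraph_adj_iff hG).mpr ⟨_, hwm, h₁⟩, h₁, mem_block.mpr ⟨_, h.symm, hwm.symm⟩⟩
  · rintro ⟨-, h₁, h₂⟩
    obtain ⟨c, hmc, hcw'⟩ := mem_block.mp h₁
    obtain ⟨c', hm'c', hc'w⟩ := mem_block.mp h₂
    obtain ⟨-, rfl⟩ :=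
      hS.eq_of_adj_adj_adj hG w.2 w'.2 hwm hmc hcw' hc'w.symm hm'c'.symm hw'm'.symm
    exact hmc

noncomputable def vertexOfTwoSubVert :
    TwoSubVert (weakSupports T) (blockPartition T (weakSupports T)) → V
  | .inl w => w
  | .inr (.inl w) => pendant w
  | .inr (.inr ⟨w, A⟩) => blockVertex w A

lemma vertexOfTwoSubVert_injective (hc : T.Connected) (h3 : 3 ≤ Fintype.card V)
    (hS : Is2Packing T (weakSupports T)) : Function.Injective (vertexOfTwoSubVert (T := T)) := by
  have hpend : ∀ w, pendant w ∉ weakSupports T :=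
    fun w => (adj_pendant w).2.not_isWeakSupport hc h3
  have hblock : ∀ w A, blockVertex w A ∉ weakSupports T :=
    fun w A => hS.notMem_of_adj w.2 (adj_blockVertex w A).1
  have hleaf : ∀ w w' A, pendant w ≠ blockVertex w' A := fun w w' A h =>
    not_isLeaf_of_block_nonempty hS w'.2 (adj_blockVertex w' A).1
      (block_blockVertex_nonempty w' A) (h ▸ (adj_pendant w).2)
  rintro (w | w | ⟨w, A⟩) (w' | w' | ⟨w', B⟩) h <;> simp only [vertexOfTwoSubVert] at h
  · exact congrArg _ (Subtype.ext h)
  · exact absurd (h ▸ w.2) (hpend w')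
  · exact absurd (h ▸ w.2) (hblock w' B)
  · exact absurd (h ▸ w'.2) (hpend w)
  · exact congrArg (Sum.inr ∘ Sum.inl) (Subtype.ext
      ((adj_pendant w).2.eq_of_adj_s8 (adj_pendant w).1.symm (h ▸ (adj_pendant w').1.symm)))
  · exact absurd h (hleaf w w' B)
  · exact absurd (h ▸ w'.2) (hblock w A)
  · exact absurd h.symm (hleaf w' w A)
  · have hw : w = w' := Subtype.ext (hS.eq_of_adj_of_adj w.2 w'.2
      (adj_blockVertex w A).1.symm (h ▸ (adj_blockVertex w' B).1.symm))
    have hAB : (A : Finset (weakSupports T)) = B := by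
      rw [← (adj_blockVertex w A).2, ← (adj_blockVertex w' B).2, h]
    exact congrArg (Sum.inr ∘ Sum.inr) (Sigma.subtype_ext hw hAB)

lemma vertexOfTwoSubVert_surjective (hG : T.IsAcyclic) (hS : Is2Packing T (weakSupports T))
    (hdom : ∀ x ∉ weakSupports T, ∃ w ∈ weakSupports T, T.Adj x w) :
    Function.Surjective (vertexOfTwoSubVert (T := T)) := by
  intro v
  by_cases hv : v ∈ weakSupports T
  · exact ⟨.inl ⟨v, hv⟩, rfl⟩
  obtain ⟨w, hw, hvw⟩ := hdom v hv
  by_cases hl : IsLeaf T v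
  · exact ⟨.inr (.inl ⟨w, hw⟩), (eq_pendant hvw.symm hl).symm⟩
  have hne := block_nonempty hS hdom hv hl
  have hA : block T _ v ∈ blockPartition T _ ⟨w, hw⟩ :=
    mem_blockPartition.mpr ⟨hne, v, hvw.symm, rfl⟩
  refine ⟨.inr (.inr ⟨⟨w, hw⟩, ⟨_, hA⟩⟩), ?_⟩
  obtain ⟨hwu, hu⟩ := adj_blockVertex ⟨w, hw⟩ ⟨_, hA⟩
  obtain ⟨z, hz⟩ := hne
  exact eq_of_mem_block hG hS hwu hvw.symm (hu ▸ hz) hz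

lemma adj_vertexOfTwoSubVert_iff (hT : T.IsTree) (h3 : 3 ≤ Fintype.card V)
    (hS : Is2Packing T (weakSupports T))
    (x y : TwoSubVert (weakSupports T) (blockPartition T (weakSupports T))) :
    T.Adj (vertexOfTwoSubVert x) (vertexOfTwoSubVert y) ↔
      (twoSubdivision (threePathGraph T (weakSupports T)) (blockPartition T (weakSupports T))).Adj
        x y := by
  rcases x with w | w | ⟨w, A⟩ <;> rcases y with w' | w' | ⟨w', B⟩
  · exact iff_of_false (hS.not_adj w.2 w'.2) id
  · exact adj_pendant_iff
  · exact adj_blockVertex_iff hS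
  · exact T.adj_comm _ _ |>.trans <| adj_pendant_iff.trans eq_comm
  · exact iff_of_false ((adj_pendant w).2.not_adj_of_isLeaf hT.connected h3 (adj_pendant w').2) id
  · exact iff_of_false (not_adj_pendant_blockVertex hS) id
  · exact T.adj_comm _ _ |>.trans <| adj_blockVertex_iff hS
  · exact iff_of_false (fun h => not_adj_pendant_blockVertex hS h.symm) id
  · exact adj_blockVertex_blockVertex_iff hT.isAcyclic hS

lemma nonempty_iso_twoSubdivision (hT : T.IsTree) (h3 : 3 ≤ Fintype.card V)
    (hS : Is2Packing T (weakSupports T))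
    (hdom : ∀ x ∉ weakSupports T, ∃ w ∈ weakSupports T, T.Adj x w) :
    Nonempty (T ≃g
      twoSubdivision (threePathGraph T (weakSupports T)) (blockPartition T (weakSupports T))) :=
  ⟨(RelIso.mk (Equiv.ofBijective _ ⟨vertexOfTwoSubVert_injective hT.connected h3 hS,
    vertexOfTwoSubVert_surjective hT.isAcyclic hS hdom⟩)
    fun {x y} => adj_vertexOfTwoSubVert_iff hT h3 hS x y).symm⟩

lemma nontrivial_weakSupports (hT : T.IsTree) (h3 : 3 ≤ Fintype.card V)
    (hS : Is2Packing T (weakSupports T))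
    (hdom : ∀ x ∉ weakSupports T, ∃ w ∈ weakSupports T, T.Adj x w) :
    Nontrivial (weakSupports T) := by
  obtain ⟨w, hw⟩ : (weakSupports T).Nonempty := by
    obtain ⟨x⟩ : Nonempty V := Fintype.card_pos_iff.mp (by omega)
    by_cases hx : x ∈ weakSupports T
    · exact ⟨x, hx⟩
    · obtain ⟨w, hw, -⟩ := hdom x hx
      exact ⟨w, hw⟩
  obtain ⟨hwl, hl⟩ := adj_pendant ⟨w, hw⟩
  have hw_leaf : ¬ IsLeaf T w := fun h => h.not_adj_of_isLeaf hT.connected h3 hl hwl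
  obtain ⟨m, hwm, hml⟩ := exists_adj_ne_of_not_isLeaf hw_leaf hwl
  have hm : ¬ IsLeaf T m := fun h => hml (eq_pendant (w := ⟨w, hw⟩) hwm h)
  obtain ⟨z, hz⟩ := block_nonempty hS hdom (hS.notMem_of_adj hw hwm) hm
  exact ⟨⟨w, hw⟩, z, ((threePathGraph_adj_iff hT.isAcyclic).mpr ⟨m, hwm, hz⟩).ne⟩

end WeakSupports

theorem exists_twoSubdivision_of_isMax2Packing {V : Type} [Fintype V] {T : SimpleGraph V}
    (hT : T.IsTree) (h3 : 3 ≤ Fintype.card V) (hW : IsMax2Packing T (weakSupports T)) :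
    ∃ (W : Type) (_ : Fintype W) (_ : DecidableEq W) (R : SimpleGraph W)
      (_ : DecidableRel R.Adj) (P : W → Finset (Finset W)),
        R.IsTree ∧ 2 ≤ Fintype.card W ∧
        (∀ v : W, IsFinsetPartitionOf (P v) (R.neighborFinset v)) ∧
        Nonempty (T ≃g twoSubdivision R P) := by
  classical
  have hdom : ∀ x ∉ weakSupports T, ∃ w ∈ weakSupports T, T.Adj x w :=
    fun x hx => hW.exists_adj hT.connected (fun w hw => ExistsUnique.exists hw) hx
  have := nontrivial_weakSupports hT h3 hW.1 hdom
  exact ⟨weakSupports T, inferInstance, inferInstance, threePathGraph T (weakSupports T),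
    inferInstance, blockPartition T (weakSupports T),
    ⟨threePathGraph_connected hT.connected hW.1 hdom, threePathGraph_isAcyclic hT.isAcyclic hW.1⟩,
    Fintype.one_lt_card, isFinsetPartitionOf_blockPartition hT.isAcyclic hW.1,
    nonempty_iso_twoSubdivision hT h3 hW.1 hdom⟩

section Iso

variable {V' : Type*} {G : SimpleGraph V} {G' : SimpleGraph V'} (e : G ≃g G')

lemma SimpleGraph.Iso.isLeaf_iff {v : V} : IsLeaf G' (e v) ↔ IsLeaf G v :=
  (e.toEquiv.existsUnique_congr fun _ => e.map_adj_iff.symm).symm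

lemma SimpleGraph.Iso.isWeakSupport_iff {v : V} : IsWeakSupport G' (e v) ↔ IsWeakSupport G v :=
  (e.toEquiv.existsUnique_congr fun _ => (and_congr e.map_adj_iff e.isLeaf_iff).symm).symm

lemma SimpleGraph.Iso.image_weakSupports : e '' weakSupports G = weakSupports G' := by
  ext x
  refine ⟨fun ⟨v, hv, hx⟩ => hx ▸ e.isWeakSupport_iff.mpr hv, fun hx => ⟨e.symm x, ?_, by simp⟩⟩
  exact e.isWeakSupport_iff.mp (by rwa [e.apply_symm_apply])

lemma SimpleGraph.Iso.dist_le (u v : V) : G'.dist (e u) (e v) ≤ G.dist u v := by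
  by_cases hr : G.Reachable u v
  · obtain ⟨p, hp⟩ := hr.exists_walk_length_eq_dist
    calc G'.dist (e u) (e v) ≤ (p.map e.toHom).length := SimpleGraph.dist_le _
      _ = G.dist u v := by rw [Walk.length_map, hp]
  · rw [dist_eq_zero_of_not_reachable hr,
      dist_eq_zero_of_not_reachable (Iso.reachable_iff.not.mpr hr)]

lemma SimpleGraph.Iso.dist_eq (u v : V) : G'.dist (e u) (e v) = G.dist u v :=
  le_antisymm (e.dist_le u v) (by simpa using e.symm.dist_le (e u) (e v))

lemma SimpleGraph.Iso.is2Packing_image_iff {S : Set V} :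
    Is2Packing G' (e '' S) ↔ Is2Packing G S := by
  rw [is2Packing_iff_pairwise, e.injective.injOn.pairwise_image]
  simp only [Set.Pairwise, Function.onFun, e.dist_eq]
  rfl

lemma IsMax2Packing.of_iso_image {S : Set V} (h : IsMax2Packing G' (e '' S)) :
    IsMax2Packing G S :=
  ⟨e.is2Packing_image_iff.mp h.1, fun S' hS' => by
    simpa only [e.injective.injOn.ncard_image] using h.2 _ (e.is2Packing_image_iff.mpr hS')⟩

end Iso

section TwoSubdivision

variable {W : Type*} {R : SimpleGraph W} {P : W → Finset (Finset W)}

def TwoSubVert.base : TwoSubVert W P → W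
  | .inl v => v
  | .inr (.inl v) => v
  | .inr (.inr p) => p.1

lemma eq_or_adj_inl_base (x : TwoSubVert W P) :
    x = .inl x.base ∨ (twoSubdivision R P).Adj x (.inl x.base) := by
  rcases x with v | v | p
  exacts [.inl rfl, .inr rfl, .inr rfl]

lemma isLeaf_twoSubdivision_iff [R.LocallyFinite]
    (hP : ∀ v, IsFinsetPartitionOf (P v) (R.neighborFinset v)) (hR : ∀ v, ∃ w, R.Adj v w)
    {x : TwoSubVert W P} : IsLeaf (twoSubdivision R P) x ↔ ∃ v, x = .inr (.inl v) := by
  rcases x with v | v | ⟨v, A, hA⟩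
  · refine iff_of_false ?_ (by simp)
    obtain ⟨w, hw⟩ := hR v
    obtain ⟨A, hA, -⟩ := ((hP v).2.1 w).mp ((mem_neighborFinset _ _ _).mpr hw)
    exact not_isLeaf_of_adj_of_adj (a := .inr (.inl v)) (b := .inr (.inr ⟨v, A, hA⟩)) rfl rfl
      (by simp)
  · refine iff_of_true ⟨.inl v, rfl, ?_⟩ ⟨v, rfl⟩
    rintro (u | u | p) h
    exacts [congrArg _ h.symm, h.elim, h.elim]
  · refine iff_of_false ?_ (by simp)
    obtain ⟨w, hwA⟩ := (hP v).1 A hA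
    have hvw : R.Adj v w := (mem_neighborFinset _ _ _).mp (((hP v).2.1 w).mpr ⟨A, hA, hwA⟩)
    obtain ⟨B, hB, hvB⟩ := ((hP w).2.1 v).mp ((mem_neighborFinset _ _ _).mpr hvw.symm)
    exact not_isLeaf_of_adj_of_adj (a := .inl v) (b := .inr (.inr ⟨w, B, hB⟩)) rfl
      ⟨hvw, hwA, hvB⟩ (by simp)

lemma weakSupports_twoSubdivision [R.LocallyFinite]
    (hP : ∀ v, IsFinsetPartitionOf (P v) (R.neighborFinset v)) (hR : ∀ v, ∃ w, R.Adj v w) :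
    weakSupports (twoSubdivision R P) = Set.range .inl := by
  ext x
  simp only [weakSupports, IsWeakSupport, isLeaf_twoSubdivision_iff hP hR, Set.mem_ofPred_eq,
    Set.mem_range]
  rcases x with v | v | p
  · refine iff_of_true ⟨.inr (.inl v), ⟨rfl, v, rfl⟩, ?_⟩ ⟨v, rfl⟩
    rintro _ ⟨h, u, rfl⟩
    exact congrArg _ (congrArg _ h.symm)
  · refine iff_of_false ?_ (by simp)
    rintro ⟨_, ⟨h, u, rfl⟩, -⟩
    exact h
  · refine iff_of_false ?_ (by simp)
    rintro ⟨_, ⟨h, u, rfl⟩, -⟩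
    exact h

lemma is2Packing_range_inl (hc : (twoSubdivision R P).Connected) :
    Is2Packing (twoSubdivision R P) (Set.range .inl) := by
  rintro _ ⟨u, rfl⟩ _ ⟨v, rfl⟩ huv
  refine (hc _ _).three_le_dist huv id ?_
  rintro (x | x | p) h₁ h₂
  exacts [h₁, huv (congrArg _ (Eq.trans h₁ h₂)), huv (congrArg _ (Eq.trans h₁ (Eq.symm h₂)))]

lemma ncard_le_of_is2Packing_twoSubdivision [Finite W] {S : Set (TwoSubVert W P)}
    (hS : Is2Packing (twoSubdivision R P) S) :
    S.ncard ≤ (Set.range (Sum.inl : W → TwoSubVert W P)).ncard :=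
  Set.ncard_le_ncard_of_injOn (fun x => Sum.inl x.base) (fun _ _ => ⟨_, rfl⟩)
    (fun x hx y hy h => hS.eq_of_eq_or_adj hx hy (eq_or_adj_inl_base x)
      (Sum.inl_injective h ▸ eq_or_adj_inl_base y))

lemma isMax2Packing_weakSupports_twoSubdivision [Finite W] [R.LocallyFinite]
    (hP : ∀ v, IsFinsetPartitionOf (P v) (R.neighborFinset v)) (hR : ∀ v, ∃ w, R.Adj v w)
    (hc : (twoSubdivision R P).Connected) :
    IsMax2Packing (twoSubdivision R P) (weakSupports (twoSubdivision R P)) := by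
  rw [weakSupports_twoSubdivision hP hR]
  exact ⟨is2Packing_range_inl hc, fun _ => ncard_le_of_is2Packing_twoSubdivision⟩

end TwoSubdivision

theorem isMax2Packing_of_iso_twoSubdivision {V' W : Type*} [Fintype W] {T : SimpleGraph V'}
    {R : SimpleGraph W} [DecidableRel R.Adj] {P : W → Finset (Finset W)} (hT : T.Connected)
    (hR : R.Connected) (hW : 2 ≤ Fintype.card W)
    (hP : ∀ v, IsFinsetPartitionOf (P v) (R.neighborFinset v)) (e : T ≃g twoSubdivision R P) :
    IsMax2Packing T (weakSupports T) := by
  have : Nontrivial W := Fintype.one_lt_card_iff_nontrivial.mp hW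
  refine IsMax2Packing.of_iso_image e ?_
  rw [e.image_weakSupports]
  exact isMax2Packing_weakSupports_twoSubdivision hP hR.preconnected.exists_adj_of_nontrivial
    (e.connected_iff.mp hT)

/-- For a tree `T` of order at least `6`, the set of weak support vertices
of `T` is a maximum 2-packing iff `T` is isomorphic to a 2-subdivision `R(P)` of some
tree `R` of order at least `2`. -/
theorem weak_supports_max_packing_iff_twoSubdivision {V : Type} [Fintype V]
    (T : SimpleGraph V) (hT : T.IsTree) (h6 : 6 ≤ Fintype.card V) :
    (Is2Packing T {v | IsWeakSupport T v} ∧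
      ∀ S : Set V, Is2Packing T S → S.ncard ≤ {v | IsWeakSupport T v}.ncard) ↔
    ∃ (W : Type) (_ : Fintype W) (_ : DecidableEq W) (R : SimpleGraph W)
      (_ : DecidableRel R.Adj) (P : W → Finset (Finset W)),
        R.IsTree ∧ 2 ≤ Fintype.card W ∧
        (∀ v : W, IsFinsetPartitionOf (P v) (R.neighborFinset v)) ∧
        Nonempty (T ≃g twoSubdivision R P) := by
  refine ⟨exists_twoSubdivision_of_isMax2Packing hT (by omega), ?_⟩
  rintro ⟨W, _, _, R, _, P, hR, hW, hP, ⟨e⟩⟩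
  exact isMax2Packing_of_iso_twoSubdivision hT.connected hR.connected hW hP e
end
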